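/- arXiv:1410.6894 — 4 statements merged into one kernel-verified Lean document; each statement's English description precedes it below -/
import Mathlib

section
/- Let R be a commutative Noetherian ring, S = R[x] a polynomial ring in one variable, and M an R-module. Then the associated primes of M ⊗_R S as an S-module are exactly the extensions P·S of associated primes P of M; in particular, if Q ∈ Ass_S(M ⊗_R S), then P := Q ∩ R ∈ Ass_R(M) and Q = P·S. -/
/-!
Over a Noetherian ring the associated primes are exactly the prime annihilators of single
elements, and `R[X] ⊗[R] M` is the polynomial module `M[X]`. If `P = Ann m`, then the constant
`m ∈ M[X]` has annihilator `P[X]`, which is prime.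

Conversely let `Q = Ann f` be prime. For `q ∈ Q` with leading coefficient `a`, the top
coefficient of `q • f = 0` is `a • f_top`, so if `a ∉ Q` we may replace `f` by `a • f`
(primality keeps the annihilator) and lower its degree; at `f = 0` the annihilator would be
everything. So `Q` contains the leading coefficients of its elements, hence `Q = (Q ∩ R)[X]`.
Finally `Q ∩ R` is the finite intersection of the annihilators of the coefficients of `f`, so
being prime it equals one of them.
-/

open TensorProduct Polynomial

lemma Submodule.colon_bot_smul_singleton_of_notMem {A N : Type*} [CommRing A] [AddCommGroup N]
    [Module A N] {x : N} {a : A} (hx : ((⊥ : Submodule A N).colon {x}).IsPrime)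
    (ha : a ∉ (⊥ : Submodule A N).colon {x}) :
    (⊥ : Submodule A N).colon {a • x} = (⊥ : Submodule A N).colon {x} := by
  ext r
  have hmul : r ∈ (⊥ : Submodule A N).colon {a • x} ↔ r * a ∈ (⊥ : Submodule A N).colon {x} := by
    simp only [mem_colon_singleton, mul_smul]
  rw [hmul]
  exact ⟨fun h => (hx.mem_or_mem h).resolve_right ha, Ideal.mul_mem_right a _⟩

namespace PolynomialModule

variable {R M : Type*} [CommRing R] [AddCommGroup M] [Module R M]

lemma coeff_smul_natDegree_add (q : R[X]) {f : PolynomialModule R M} {n : ℕ}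
    (hf : ∀ k, n < k → f.coeff k = 0) :
    (q • f).coeff (q.natDegree + n) = q.leadingCoeff • f.coeff n := by
  rw [smul_apply, Finset.sum_eq_single (q.natDegree, n)]
  · rfl
  · rintro ⟨i, j⟩ hij hne
    rw [Finset.HasAntidiagonal.mem_antidiagonal] at hij
    rcases lt_or_ge q.natDegree i with hi | hi
    · rw [coeff_eq_zero_of_natDegree_lt hi, zero_smul]
    · rw [hf j (by grind), smul_zero]
  · simp

lemma colon_bot_single_zero (m : M) :
    (⊥ : Submodule R[X] (PolynomialModule R M)).colon {single R 0 m} =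
      ((⊥ : Submodule R M).colon {m}).map C := by
  ext q
  simp only [Submodule.mem_colon_singleton, Submodule.mem_bot, Ideal.mem_map_C_iff]
  rw [← coeff_eq_zero, Finsupp.ext_iff]
  simp

lemma comap_C_colon_bot (f : PolynomialModule R M) :
    ((⊥ : Submodule R[X] (PolynomialModule R M)).colon {f}).comap C =
      f.coeff.support.inf fun i => (⊥ : Submodule R M).colon {f.coeff i} := by
  ext a
  simp only [Ideal.mem_comap, Submodule.mem_colon_singleton, Submodule.mem_bot,
    Submodule.mem_finsetInf, C_eq_algebraMap, algebraMap_smul]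
  rw [← coeff_eq_zero, Finsupp.ext_iff]
  have hcoeff : ∀ i, (a • f).coeff i = a • f.coeff i := fun _ => rfl
  simp only [hcoeff, Finsupp.coe_zero, Pi.zero_apply, Finsupp.mem_support_iff]
  exact forall_congr' fun i => ⟨fun h _ => h, fun h => by by_cases hi : f.coeff i = 0 <;> simp_all⟩

lemma C_leadingCoeff_mem_colon_bot {f : PolynomialModule R M}
    (hf : ((⊥ : Submodule R[X] (PolynomialModule R M)).colon {f}).IsPrime) {q : R[X]}
    (hq : q ∈ (⊥ : Submodule R[X] (PolynomialModule R M)).colon {f}) :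
    C q.leadingCoeff ∈ (⊥ : Submodule R[X] (PolynomialModule R M)).colon {f} := by
  obtain ⟨n, hn⟩ := Finset.exists_nat_subset_range f.coeff.support
  induction n generalizing f with
  | zero =>
    have hf0 : f = 0 := by simpa [← coeff_eq_zero] using hn
    subst hf0
    exact absurd (by simp) hf.ne_top
  | succ n ih =>
    by_contra hc
    have hcolon : (⊥ : Submodule R[X] (PolynomialModule R M)).colon {q.leadingCoeff • f} =
        (⊥ : Submodule R[X] (PolynomialModule R M)).colon {f} := by
      rw [← algebraMap_smul R[X] q.leadingCoeff f]
      exact Submodule.colon_bot_smul_singleton_of_notMem hf hc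
    have hvanish : ∀ k, n < k → f.coeff k = 0 := fun k hk => by
      by_contra h
      have := Finset.mem_range.mp (hn (Finsupp.mem_support_iff.mpr h))
      omega
    have htop : q.leadingCoeff • f.coeff n = 0 := by
      rw [← coeff_smul_natDegree_add q hvanish, (Submodule.mem_colon_singleton.mp hq : q • f ∈ ⊥)]
      rfl
    have hsupp : (q.leadingCoeff • f).coeff.support ⊆ Finset.range n := by
      intro k hk
      have hk' : q.leadingCoeff • f.coeff k ≠ 0 := Finsupp.mem_support_iff.mp hk
      have hkn : k ≠ n := by rintro rfl; exact hk' htop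
      rw [Finset.mem_range]
      by_contra hge
      exact hk' (by rw [hvanish k (by omega), smul_zero])
    rw [← hcolon] at hf hq hc
    exact hc (ih hf hq hsupp)

lemma map_C_comap_C_colon_bot {f : PolynomialModule R M}
    (hf : ((⊥ : Submodule R[X] (PolynomialModule R M)).colon {f}).IsPrime) :
    (((⊥ : Submodule R[X] (PolynomialModule R M)).colon {f}).comap C).map C =
      (⊥ : Submodule R[X] (PolynomialModule R M)).colon {f} := by
  refine Ideal.map_C_comap_of_comap_eq_leadingCoeff _ (le_antisymm (fun a ha => ?_) fun a ha => ?_)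
  · exact (Ideal.mem_leadingCoeff _ a).mpr ⟨C a, ha, leadingCoeff_C a⟩
  · obtain ⟨q, hq, rfl⟩ := (Ideal.mem_leadingCoeff _ a).mp ha
    exact C_leadingCoeff_mem_colon_bot hf hq

variable [IsNoetherianRing R]

theorem isAssociatedPrime_map_C {P : Ideal R} (hP : IsAssociatedPrime P M) :
    IsAssociatedPrime (P.map C) (PolynomialModule R M) := by
  obtain ⟨hprime, m, rfl⟩ := isAssociatedPrime_iff.mp hP
  exact isAssociatedPrime_iff.mpr ⟨Ideal.isPrime_map_C_of_isPrime, single R 0 m,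
    (colon_bot_single_zero m).symm⟩

theorem map_C_comap_C_of_isAssociatedPrime {Q : Ideal R[X]}
    (hQ : IsAssociatedPrime Q (PolynomialModule R M)) : (Q.comap C).map C = Q := by
  obtain ⟨hprime, f, rfl⟩ := isAssociatedPrime_iff.mp hQ
  exact map_C_comap_C_colon_bot hprime

theorem isAssociatedPrime_comap_C {Q : Ideal R[X]}
    (hQ : IsAssociatedPrime Q (PolynomialModule R M)) : IsAssociatedPrime (Q.comap C) M := by
  obtain ⟨hprime, f, rfl⟩ := isAssociatedPrime_iff.mp hQ
  have hP := Ideal.comap_isPrime C ((⊥ : Submodule R[X] (PolynomialModule R M)).colon {f})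
  rw [comap_C_colon_bot] at hP ⊢
  obtain ⟨i, -, hi⟩ := Ideal.eq_inf_of_isPrime_inf hP
  exact isAssociatedPrime_iff.mpr ⟨hP, f.coeff i, hi.symm⟩

theorem associatedPrimes_eq_image_map_C :
    associatedPrimes R[X] (PolynomialModule R M) = Ideal.map C '' associatedPrimes R M := by
  ext Q
  refine ⟨fun hQ => ⟨Q.comap C, isAssociatedPrime_comap_C hQ,
    map_C_comap_C_of_isAssociatedPrime hQ⟩, ?_⟩
  rintro ⟨P, hP, rfl⟩
  exact isAssociatedPrime_map_C hP

end PolynomialModule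

theorem stmt_2_general (R : Type*) [CommRing R] [IsNoetherianRing R]
    (M : Type*) [AddCommGroup M] [Module R M] :
    associatedPrimes (Polynomial R) (Polynomial R ⊗[R] M) =
      (fun P : Ideal R => P.map (algebraMap R (Polynomial R))) '' associatedPrimes R M ∧
    ∀ Q ∈ associatedPrimes (Polynomial R) (Polynomial R ⊗[R] M),
      Q.comap (algebraMap R (Polynomial R)) ∈ associatedPrimes R M ∧
      Q = (Q.comap (algebraMap R (Polynomial R))).map (algebraMap R (Polynomial R)) := by
  rw [LinearEquiv.AssociatedPrimes.eq
    (PolynomialModule.polynomialTensorProductLEquivPolynomialModule R M), algebraMap_eq]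
  exact ⟨PolynomialModule.associatedPrimes_eq_image_map_C, fun Q hQ =>
    ⟨PolynomialModule.isAssociatedPrime_comap_C hQ,
      (PolynomialModule.map_C_comap_C_of_isAssociatedPrime hQ).symm⟩⟩

/-- For a Noetherian ring `R`, `S = R[x]` and a finitely generated `R`-module `M`, the
associated primes of `M ⊗_R S` over `S` are exactly the extensions `P·S` of the
associated primes `P` of `M`; moreover any `Q ∈ Ass_S(M ⊗_R S)` contracts to an
associated prime of `M` and equals its extension. -/
theorem stmt_2 (R : Type*) [CommRing R] [IsNoetherianRing R]
    (M : Type*) [AddCommGroup M] [Module R M] [Module.Finite R M] :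
    associatedPrimes (Polynomial R) (Polynomial R ⊗[R] M) =
      (fun P : Ideal R => P.map (algebraMap R (Polynomial R))) '' associatedPrimes R M ∧
    ∀ Q ∈ associatedPrimes (Polynomial R) (Polynomial R ⊗[R] M),
      Q.comap (algebraMap R (Polynomial R)) ∈ associatedPrimes R M ∧
      Q = (Q.comap (algebraMap R (Polynomial R))).map (algebraMap R (Polynomial R)) :=
  stmt_2_general R M
end

section
/- Let R be a commutative ring, S = R[x], M an R-module, and Q ∈ Spec(S) with Q = ann_S(f) for f = Σ_i m_i x^i ∈ M[x]. Then Q ∩ R = ann_R(m_i) for some coefficient m_i of f. -/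
open Polynomial

theorem Ideal.IsPrime.exists_eq_of_eq_finset_inf {R ι : Type*} [CommSemiring R] {P : Ideal R}
    (hP : P.IsPrime) {s : Finset ι} {I : ι → Ideal R} (h : P = s.inf I) :
    ∃ i ∈ s, P = I i := by
  obtain ⟨i, hi, hIP⟩ := hP.inf_le'.mp h.ge
  exact ⟨i, hi, le_antisymm (h.le.trans (Finset.inf_le hi)) hIP⟩

namespace PolynomialModule

variable {R M : Type*} [CommRing R] [AddCommGroup M] [Module R M]

theorem C_smul (r : R) (f : PolynomialModule R M) : C r • f = r • f := by
  rw [← algebraMap_eq, algebraMap_smul]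

theorem smul_eq_zero_iff_forall_coeff (r : R) (f : PolynomialModule R M) :
    r • f = 0 ↔ ∀ i, r • f.coeff i = 0 := by
  rw [← coeff_eq_zero, Finsupp.ext_iff]
  rfl

theorem comap_C_annihilator_span_singleton (f : PolynomialModule R M) :
    (Submodule.span R[X] {f}).annihilator.comap C =
      f.coeff.support.inf fun i => (Submodule.span R {f.coeff i}).annihilator := by
  ext r
  simp only [Ideal.mem_comap, Submodule.mem_annihilator_span_singleton, Submodule.mem_finsetInf,
    C_smul, smul_eq_zero_iff_forall_coeff, Finsupp.mem_support_iff]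
  refine ⟨fun h i _ => h i, fun h i => ?_⟩
  by_cases hi : f.coeff i = 0
  · rw [hi, smul_zero]
  · exact h i hi

end PolynomialModule

/-- If a prime `Q` of `R[x]` is the annihilator of an element `f = Σ mᵢ xⁱ` of `M[x]`,
then its contraction `Q ∩ R` is the annihilator of one of the coefficients `mᵢ` of `f`. -/
theorem stmt_3 (R : Type*) [CommRing R] (M : Type*) [AddCommGroup M] [Module R M]
    (Q : Ideal (Polynomial R)) [Q.IsPrime] (f : PolynomialModule R M)
    (hQ : Q = (Submodule.span (Polynomial R) {f}).annihilator) :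
    ∃ i : ℕ, Q.comap (Polynomial.C (R := R)) = (Submodule.span R {f.coeff i}).annihilator := by
  have hcontr : (Q.comap C).IsPrime := Ideal.IsPrime.comap C
  obtain ⟨i, -, hi⟩ := hcontr.exists_eq_of_eq_finset_inf
    (hQ ▸ PolynomialModule.comap_C_annihilator_span_singleton f)
  exact ⟨i, hi⟩
end

section
/- In S = ℝ[x,y,z], the ideal ⟨x,y,z⟩² is generated by the sum of the four ideals J₁ = ⟨y², yz, z²⟩, J₂ = ⟨x², xz, z²⟩, J₃ = ⟨x², xy, y²⟩, J₄ = ⟨(x−z)², (x−z)(y−z), (y−z)²⟩, i.e., J₁ + J₂ + J₃ + J₄ = ⟨x,y,z⟩². -/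
/-!
Each `Jᵢ` is spanned by the pairwise products of two linear forms lying in `⟨x,y,z⟩`, so it is
contained in `⟨x,y,z⟩²`. Conversely, `J₁ + J₂ + J₃` already contains all six degree-two
monomials, which span `⟨x,y,z⟩²`.
-/

open MvPolynomial

namespace Ideal

variable {R : Type*} [CommRing R]

theorem span_pow_two_le {s : Set R} {K : Ideal R} (h : ∀ p ∈ s, ∀ q ∈ s, p * q ∈ K) :
    span s ^ 2 ≤ K := by
  rw [sq, span_mul_span', span_le]
  rintro _ ⟨p, hp, q, hq, rfl⟩
  exact h p hp q hq

theorem span_sq_mul_sq_le_pow_two {I : Ideal R} {a b : R} (ha : a ∈ I) (hb : b ∈ I) :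
    span {a ^ 2, a * b, b ^ 2} ≤ I ^ 2 := by
  rw [span_le]
  rintro _ (rfl | rfl | rfl) <;> rw [sq I]
  · exact sq a ▸ mul_mem_mul ha ha
  · exact mul_mem_mul ha hb
  · exact sq b ▸ mul_mem_mul hb hb

theorem span_three_pow_two_le_sup (a b c : R) :
    span {a, b, c} ^ 2 ≤
      span {b ^ 2, b * c, c ^ 2} + span {a ^ 2, a * c, c ^ 2} + span {a ^ 2, a * b, b ^ 2} := by
  refine span_pow_two_le fun p hp q hq ↦ ?_
  simp only [Set.mem_insert_iff, Set.mem_singleton_iff] at hp hq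
  rcases hp with hp | hp | hp <;> rcases hq with hq | hq | hq <;>
    simp only [hp, hq, ← sq, mul_comm c, mul_comm b a] <;>
    first
      | (refine mem_sup_left (mem_sup_left (subset_span ?_)); simp; done)
      | (refine mem_sup_left (mem_sup_right (subset_span ?_)); simp; done)
      | (refine mem_sup_right (subset_span ?_); simp)

end Ideal

/-- In `S = ℝ[x,y,z]`, with `x = X 0`, `y = X 1`, `z = X 2`:
`J₁ + J₂ + J₃ + J₄ = ⟨x,y,z⟩²`, where `J₁ = ⟨y²,yz,z²⟩`, `J₂ = ⟨x²,xz,z²⟩`,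
`J₃ = ⟨x²,xy,y²⟩`, `J₄ = ⟨(x-z)²,(x-z)(y-z),(y-z)²⟩`. -/
theorem stmt_8 :
    (Ideal.span {(X 1 : MvPolynomial (Fin 3) ℝ) ^ 2, X 1 * X 2, X 2 ^ 2} +
      Ideal.span {(X 0 : MvPolynomial (Fin 3) ℝ) ^ 2, X 0 * X 2, X 2 ^ 2} +
      Ideal.span {(X 0 : MvPolynomial (Fin 3) ℝ) ^ 2, X 0 * X 1, X 1 ^ 2} +
      Ideal.span {((X 0 : MvPolynomial (Fin 3) ℝ) - X 2) ^ 2,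
        (X 0 - X 2) * (X 1 - X 2), (X 1 - X 2) ^ 2}) =
      (Ideal.span {(X 0 : MvPolynomial (Fin 3) ℝ), X 1, X 2}) ^ 2 := by
  set I := Ideal.span {(X 0 : MvPolynomial (Fin 3) ℝ), X 1, X 2}
  have hx : X 0 ∈ I := Ideal.subset_span (by simp)
  have hy : X 1 ∈ I := Ideal.subset_span (by simp)
  have hz : X 2 ∈ I := Ideal.subset_span (by simp)
  refine le_antisymm (sup_le (sup_le (sup_le ?_ ?_) ?_) ?_)
    ((Ideal.span_three_pow_two_le_sup _ _ _).trans le_sup_left)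
  · exact Ideal.span_sq_mul_sq_le_pow_two hy hz
  · exact Ideal.span_sq_mul_sq_le_pow_two hx hz
  · exact Ideal.span_sq_mul_sq_le_pow_two hx hy
  · exact Ideal.span_sq_mul_sq_le_pow_two (sub_mem hx hz) (sub_mem hy hz)
end

section
/- Let σ ⊂ ℝ^{n+1} be a convex polyhedral cone of dimension d+2 and W ⊂ aff(σ) a linear subspace of dimension d. Then σ has at most two faces γ of dimension d+1 with W ⊆ aff(γ). -/
open Module

/-- A convex polyhedral cone: the positive hull of a finite set of vectors. -/
def IsPolyhedralCone {E : Type*} [AddCommGroup E] [Module ℝ E] (σ : Set E) : Prop :=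
  ∃ V : Finset E, σ = {x | ∃ c : E → ℝ, (∀ v, 0 ≤ c v) ∧ x = ∑ v ∈ V, c v • v}

/-- A face of a cone `σ` is `σ` itself or the intersection of `σ` with a supporting
hyperplane through the origin. -/
def IsFaceOfCone {E : Type*} [AddCommGroup E] [Module ℝ E] (σ γ : Set E) : Prop :=
  γ = σ ∨ ∃ f : E →ₗ[ℝ] ℝ, (∀ x ∈ σ, 0 ≤ f x) ∧ γ = σ ∩ {x | f x = 0}

/-- Two subspaces of dimension `d+1` both containing a subspace `W` of dimension `d`
either are equal or meet exactly in `W`. -/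
lemma aux_inf {E : Type*} [AddCommGroup E] [Module ℝ E] [FiniteDimensional ℝ E]
    (d : ℕ) (W S T : Submodule ℝ E) (hW : finrank ℝ W = d)
    (hS : finrank ℝ S = d + 1) (hT : finrank ℝ T = d + 1)
    (hWS : W ≤ S) (hWT : W ≤ T) (hST : S ≠ T) : S ⊓ T ≤ W := by
  by_contra hcon
  have hWle : W ≤ S ⊓ T := le_inf hWS hWT
  have hlt : W < S ⊓ T := lt_of_le_of_ne hWle (fun h => hcon (h ▸ le_rfl))
  have h1 : finrank ℝ W < finrank ℝ (S ⊓ T : Submodule ℝ E) :=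
    Submodule.finrank_lt_finrank_of_lt hlt
  have h2 : finrank ℝ (S ⊓ T : Submodule ℝ E) ≤ finrank ℝ S :=
    Submodule.finrank_mono inf_le_left
  have hIS : (S ⊓ T : Submodule ℝ E) = S :=
    Submodule.eq_of_le_of_finrank_le inf_le_left (by omega)
  have hSleT : S ≤ T := by rw [← hIS]; exact inf_le_right
  exact hST (Submodule.eq_of_le_of_finrank_le hSleT (by omega))

lemma three_faces_aux {E : Type*} [AddCommGroup E] [Module ℝ E] [FiniteDimensional ℝ E]
    (d : ℕ) (σ : Set E) (hdim : finrank ℝ (Submodule.span ℝ σ) = d + 2)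
    (W : Submodule ℝ E) (hWdim : finrank ℝ W = d)
    (γ₁ γ₂ γ₃ : Set E) (f₁ f₂ f₃ : E →ₗ[ℝ] ℝ)
    (hp₁ : ∀ x ∈ σ, 0 ≤ f₁ x) (hp₂ : ∀ x ∈ σ, 0 ≤ f₂ x) (hp₃ : ∀ x ∈ σ, 0 ≤ f₃ x)
    (he₁ : γ₁ = σ ∩ {x | f₁ x = 0}) (he₂ : γ₂ = σ ∩ {x | f₂ x = 0})
    (he₃ : γ₃ = σ ∩ {x | f₃ x = 0})
    (hd₁ : finrank ℝ (Submodule.span ℝ γ₁) = d + 1)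
    (hd₂ : finrank ℝ (Submodule.span ℝ γ₂) = d + 1)
    (hd₃ : finrank ℝ (Submodule.span ℝ γ₃) = d + 1)
    (hW₁ : W ≤ Submodule.span ℝ γ₁) (hW₂ : W ≤ Submodule.span ℝ γ₂)
    (hW₃ : W ≤ Submodule.span ℝ γ₃)
    (h12 : γ₁ ≠ γ₂) (h13 : γ₁ ≠ γ₃) (h23 : γ₂ ≠ γ₃) : False := by
  set S₁ := Submodule.span ℝ γ₁ with hS₁def
  set S₂ := Submodule.span ℝ γ₂ with hS₂def
  set S₃ := Submodule.span ℝ γ₃ with hS₃def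
  -- each fᵢ vanishes on Sᵢ
  have hker₁ : S₁ ≤ LinearMap.ker f₁ :=
    Submodule.span_le.2 (fun x hx => (he₁ ▸ hx).2)
  have hker₂ : S₂ ≤ LinearMap.ker f₂ :=
    Submodule.span_le.2 (fun x hx => (he₂ ▸ hx).2)
  have hker₃ : S₃ ≤ LinearMap.ker f₃ :=
    Submodule.span_le.2 (fun x hx => (he₃ ▸ hx).2)
  have hsub₁ : γ₁ ⊆ σ := he₁ ▸ Set.inter_subset_left
  have hsub₂ : γ₂ ⊆ σ := he₂ ▸ Set.inter_subset_left
  have hsub₃ : γ₃ ⊆ σ := he₃ ▸ Set.inter_subset_left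
  -- distinct faces have distinct spans
  have spanne : ∀ γ γ' : Set E, ∀ f f' : E →ₗ[ℝ] ℝ,
      γ = σ ∩ {x | f x = 0} → γ' = σ ∩ {x | f' x = 0} →
      γ ≠ γ' → Submodule.span ℝ γ ≠ Submodule.span ℝ γ' := by
    intro γ γ' f f' he he' hne hspan
    apply hne
    have k : Submodule.span ℝ γ ≤ LinearMap.ker f :=
      Submodule.span_le.2 (fun x hx => (he ▸ hx).2)
    have k' : Submodule.span ℝ γ' ≤ LinearMap.ker f' :=
      Submodule.span_le.2 (fun x hx => (he' ▸ hx).2)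
    ext x
    constructor
    · intro hx
      rw [he']
      exact ⟨(he ▸ hx).1, k' (hspan ▸ Submodule.subset_span hx)⟩
    · intro hx
      rw [he]
      exact ⟨(he' ▸ hx).1, k (hspan.symm ▸ Submodule.subset_span hx)⟩
  have hS12 : S₁ ≠ S₂ := spanne _ _ _ _ he₁ he₂ h12
  have hS13 : S₁ ≠ S₃ := spanne _ _ _ _ he₁ he₃ h13
  have hS23 : S₂ ≠ S₃ := spanne _ _ _ _ he₂ he₃ h23
  have i12 : S₁ ⊓ S₂ ≤ W := aux_inf d W S₁ S₂ hWdim hd₁ hd₂ hW₁ hW₂ hS12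
  have i13 : S₁ ⊓ S₃ ≤ W := aux_inf d W S₁ S₃ hWdim hd₁ hd₃ hW₁ hW₃ hS13
  have i23 : S₂ ⊓ S₃ ≤ W := aux_inf d W S₂ S₃ hWdim hd₂ hd₃ hW₂ hW₃ hS23
  -- pick vᵢ ∈ γᵢ \ W
  have pick : ∀ γ : Set E, finrank ℝ (Submodule.span ℝ γ) = d + 1 → ∃ v ∈ γ, v ∉ W := by
    intro γ hd
    by_contra hcon
    push_neg at hcon
    have : Submodule.span ℝ γ ≤ W := Submodule.span_le.2 hcon
    have := Submodule.finrank_mono this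
    omega
  obtain ⟨v₁, hv₁γ, hv₁W⟩ := pick γ₁ hd₁
  obtain ⟨v₂, hv₂γ, hv₂W⟩ := pick γ₂ hd₂
  obtain ⟨v₃, hv₃γ, hv₃W⟩ := pick γ₃ hd₃
  have hv₁S : v₁ ∈ S₁ := Submodule.subset_span hv₁γ
  have hv₂S : v₂ ∈ S₂ := Submodule.subset_span hv₂γ
  have hv₃S : v₃ ∈ S₃ := Submodule.subset_span hv₃γ
  -- vᵢ not in Sⱼ for j ≠ i
  have hv₂S₁ : v₂ ∉ S₁ := fun h => hv₂W (i12 ⟨h, hv₂S⟩)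
  have hv₃S₁ : v₃ ∉ S₁ := fun h => hv₃W (i13 ⟨h, hv₃S⟩)
  have hv₁S₂ : v₁ ∉ S₂ := fun h => hv₁W (i12 ⟨hv₁S, h⟩)
  have hv₃S₂ : v₃ ∉ S₂ := fun h => hv₃W (i23 ⟨h, hv₃S⟩)
  -- positivity of off-diagonal values
  have fpos : ∀ (f : E →ₗ[ℝ] ℝ) (γ : Set E), (∀ x ∈ σ, 0 ≤ f x) → γ = σ ∩ {x | f x = 0} →
      ∀ v : E, v ∈ σ → v ∉ Submodule.span ℝ γ → 0 < f v := by
    intro f γ hp he v hvσ hvS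
    rcases lt_or_eq_of_le (hp v hvσ) with h | h
    · exact h
    · exact absurd (Submodule.subset_span (he ▸ ⟨hvσ, h.symm⟩ : v ∈ γ)) hvS
  have p12 : 0 < f₁ v₂ := fpos f₁ γ₁ hp₁ he₁ v₂ (hsub₂ hv₂γ) hv₂S₁
  have p13 : 0 < f₁ v₃ := fpos f₁ γ₁ hp₁ he₁ v₃ (hsub₃ hv₃γ) hv₃S₁
  have p21 : 0 < f₂ v₁ := fpos f₂ γ₂ hp₂ he₂ v₁ (hsub₁ hv₁γ) hv₁S₂
  have p23 : 0 < f₂ v₃ := fpos f₂ γ₂ hp₂ he₂ v₃ (hsub₃ hv₃γ) hv₃S₂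
  have p31 : 0 < f₃ v₁ := by
    rcases lt_or_eq_of_le (hp₃ v₁ (hsub₁ hv₁γ)) with h | h
    · exact h
    · exact absurd (i13 ⟨hv₁S, Submodule.subset_span (he₃ ▸ ⟨hsub₁ hv₁γ, h.symm⟩)⟩) hv₁W
  have p32 : 0 < f₃ v₂ := by
    rcases lt_or_eq_of_le (hp₃ v₂ (hsub₂ hv₂γ)) with h | h
    · exact h
    · exact absurd (i23 ⟨hv₂S, Submodule.subset_span (he₃ ▸ ⟨hsub₂ hv₂γ, h.symm⟩)⟩) hv₂W
  -- spans: S₁ = W ⊔ ℝv₁, span σ = S₁ ⊔ ℝv₂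
  have hσspan : ∀ γ : Set E, γ ⊆ σ → Submodule.span ℝ γ ≤ Submodule.span ℝ σ :=
    fun γ h => Submodule.span_mono h
  have hS₁eq : W ⊔ Submodule.span ℝ {v₁} = S₁ := by
    apply Submodule.eq_of_le_of_finrank_le
    · exact sup_le hW₁ ((Submodule.span_singleton_le_iff_mem _ _).2 hv₁S)
    · have hlt : W < W ⊔ Submodule.span ℝ {v₁} := by
        refine lt_of_le_of_ne le_sup_left (fun h => hv₁W ?_)
        rw [h]
        exact Submodule.mem_sup_right (Submodule.mem_span_singleton_self v₁)
      have := Submodule.finrank_lt_finrank_of_lt hlt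
      omega
  have htot : S₁ ⊔ Submodule.span ℝ {v₂} = Submodule.span ℝ σ := by
    apply Submodule.eq_of_le_of_finrank_le
    · exact sup_le (hσspan γ₁ hsub₁)
        ((Submodule.span_singleton_le_iff_mem _ _).2 (Submodule.subset_span (hsub₂ hv₂γ)))
    · have hlt : S₁ < S₁ ⊔ Submodule.span ℝ {v₂} := by
        refine lt_of_le_of_ne le_sup_left (fun h => hv₂S₁ ?_)
        rw [h]
        exact Submodule.mem_sup_right (Submodule.mem_span_singleton_self v₂)
      have := Submodule.finrank_lt_finrank_of_lt hlt
      omega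
  -- decompose v₃
  have hv₃tot : v₃ ∈ S₁ ⊔ Submodule.span ℝ {v₂} := by
    rw [htot]; exact Submodule.subset_span (hsub₃ hv₃γ)
  obtain ⟨u, hu, z, hz, huv⟩ := Submodule.mem_sup.1 hv₃tot
  obtain ⟨b, rfl⟩ := Submodule.mem_span_singleton.1 hz
  rw [← hS₁eq] at hu
  obtain ⟨w, hw, y, hy, hwy⟩ := Submodule.mem_sup.1 hu
  obtain ⟨a, rfl⟩ := Submodule.mem_span_singleton.1 hy
  have hv₃eq : v₃ = w + a • v₁ + b • v₂ := by rw [← huv, ← hwy]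
  -- evaluate functionals
  have f₁w : f₁ w = 0 := hker₁ (hW₁ hw)
  have f₁v₁ : f₁ v₁ = 0 := hker₁ hv₁S
  have f₂w : f₂ w = 0 := hker₂ (hW₂ hw)
  have f₃w : f₃ w = 0 := hker₃ (hW₃ hw)
  have f₂v₂ : f₂ v₂ = 0 := hker₂ hv₂S
  have f₃v₃ : f₃ v₃ = 0 := hker₃ hv₃S
  have e₁ : f₁ v₃ = b * f₁ v₂ := by
    rw [hv₃eq]; simp [f₁w, f₁v₁, map_add, map_smul, smul_eq_mul]
  have e₂ : f₂ v₃ = a * f₂ v₁ := by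
    rw [hv₃eq]; simp [f₂w, f₂v₂, map_add, map_smul, smul_eq_mul]
  have hb : 0 < b := by
    by_contra h
    push_neg at h
    nlinarith [e₁, p13, p12]
  have ha : 0 < a := by
    by_contra h
    push_neg at h
    nlinarith [e₂, p23, p21]
  have e₃ : f₃ v₃ = a * f₃ v₁ + b * f₃ v₂ := by
    rw [hv₃eq]; simp [f₃w, map_add, map_smul, smul_eq_mul]
  nlinarith [f₃v₃, e₃, p31, p32, ha, hb]

/-- If `σ ⊂ ℝ^{n+1}` is a convex polyhedral cone of dimension `d+2` and `W ⊆ aff(σ)` is a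
linear subspace of dimension `d`, then `σ` has at most two faces `γ` of dimension `d+1`
with `W ⊆ aff(γ)`. -/
theorem stmt_18 (n d : ℕ) (σ : Set (Fin (n + 1) → ℝ)) (hσ : IsPolyhedralCone σ)
    (hdim : finrank ℝ (Submodule.span ℝ σ) = d + 2)
    (W : Submodule ℝ (Fin (n + 1) → ℝ)) (hWdim : finrank ℝ W = d)
    (hWaff : W ≤ Submodule.span ℝ σ) :
    {γ : Set (Fin (n + 1) → ℝ) |
        IsFaceOfCone σ γ ∧ finrank ℝ (Submodule.span ℝ γ) = d + 1 ∧
          W ≤ Submodule.span ℝ γ}.encard ≤ 2 := by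
  set S := {γ : Set (Fin (n + 1) → ℝ) |
      IsFaceOfCone σ γ ∧ finrank ℝ (Submodule.span ℝ γ) = d + 1 ∧
        W ≤ Submodule.span ℝ γ} with hSdef
  -- every γ in S arises from a functional
  have get : ∀ γ ∈ S, ∃ f : (Fin (n + 1) → ℝ) →ₗ[ℝ] ℝ,
      (∀ x ∈ σ, 0 ≤ f x) ∧ γ = σ ∩ {x | f x = 0} := by
    intro γ hγ
    obtain ⟨hface, hd, -⟩ := hγ
    rcases hface with rfl | h
    · omega
    · exact h
  by_contra hcon
  push_neg at hcon
  have h1 : (1 : ℕ∞) < S.encard := lt_trans (by norm_num) hcon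
  obtain ⟨γ₁, γ₂, hγ₁, hγ₂, h12⟩ := Set.one_lt_encard_iff.1 h1
  have : ¬ S ⊆ {γ₁, γ₂} := by
    intro hsub
    exact absurd (le_trans (Set.encard_mono hsub) (Set.encard_pair h12).le) (not_le.2 hcon)
  obtain ⟨γ₃, hγ₃, h3⟩ := Set.not_subset.1 this
  simp only [Set.mem_insert_iff, Set.mem_singleton_iff, not_or] at h3
  obtain ⟨f₁, hp₁, he₁⟩ := get γ₁ hγ₁
  obtain ⟨f₂, hp₂, he₂⟩ := get γ₂ hγ₂
  obtain ⟨f₃, hp₃, he₃⟩ := get γ₃ hγ₃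
  exact three_faces_aux d σ hdim W hWdim γ₁ γ₂ γ₃ f₁ f₂ f₃ hp₁ hp₂ hp₃ he₁ he₂ he₃
    hγ₁.2.1 hγ₂.2.1 hγ₃.2.1 hγ₁.2.2 hγ₂.2.2 hγ₃.2.2 h12 (fun h => h3.1 h.symm)
    (fun h => h3.2 h.symm)
end
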